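/- arXiv:1310.1950 — 2 statements merged into one kernel-verified Lean document; each statement's English description precedes it below -/
import Mathlib

section
/- Let K be a zero-dimensional compact line with minimum 0. The linear span of the characteristic functions χ_{[0,s]}, where s ranges over the right-isolated points of K, is dense in C(K) with the sup norm. -/
open Set TopologicalSpace

/-- A point of a linear order is right-isolated if it is the maximum or has a successor. -/
def RightIsolated {K : Type*} [LinearOrder K] (b : K) : Prop :=
  IsMax b ∨ ∃ u, b ⋖ u

/-!
Stone–Weierstrass. The indicators `χ_{[0,s]}` with `s` right-isolated are closed under products
(`χ_{[0,s]} χ_{[0,t]} = χ_{[0, min s t]}`) and contain `1 = χ_{[0, max K]}`, so their span is a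
subalgebra. It separates points: for `x < y`, a clopen `U` with `x ∈ U ⊆ [0, y)` has a greatest
element `s`, and `s` is right-isolated because `U` is open; then `χ_{[0,s]}` separates `x` and `y`.
-/

namespace RightIsolated

variable {K : Type*} [LinearOrder K]

theorem min {s t : K} (hs : RightIsolated s) (ht : RightIsolated t) :
    RightIsolated (min s t) := by
  rcases le_total s t with h | h
  · rwa [min_eq_left h]
  · rwa [min_eq_right h]

variable [TopologicalSpace K] [OrderTopology K]

theorem isClopen_Iic {s : K} (hs : RightIsolated s) : IsClopen (Iic s) := by
  refine ⟨isClosed_Iic, ?_⟩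
  rcases hs with hmax | ⟨u, hu⟩
  · rw [(hmax.isTop).Iic_eq]
    exact isOpen_univ
  · rw [← hu.Iio_eq]
    exact isOpen_Iio

end RightIsolated

theorem IsGreatest.rightIsolated_of_isOpen {K : Type*} [LinearOrder K] [TopologicalSpace K]
    [OrderTopology K] {U : Set K} {s : K} (hU : IsOpen U) (hs : IsGreatest U s) :
    RightIsolated s := by
  by_cases hmax : IsMax s
  · exact Or.inl hmax
  obtain ⟨u, hu, hIco⟩ := exists_Ico_subset_of_mem_nhds (hU.mem_nhds hs.1) (not_isMax_iff.mp hmax)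
  exact Or.inr ⟨u, hu, fun t hst htu => (hs.2 (hIco ⟨hst.le, htu⟩)).not_gt hst⟩

theorem exists_rightIsolated_mem_Ico {K : Type*} [LinearOrder K] [TopologicalSpace K]
    [OrderTopology K] [CompactSpace K] (hzd : IsTopologicalBasis {U : Set K | IsClopen U})
    {x y : K} (hxy : x < y) : ∃ s, RightIsolated s ∧ s ∈ Ico x y := by
  obtain ⟨U, hU, hxU, hUy⟩ := hzd.exists_subset_of_mem_open (mem_Iio.mpr hxy) isOpen_Iio
  obtain ⟨s, hs⟩ := hU.isClosed.isCompact.exists_isGreatest ⟨x, hxU⟩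
  exact ⟨s, hs.rightIsolated_of_isOpen hU.isOpen, hs.2 hxU, hUy hs.1⟩

section Indicators

variable (K : Type*) [LinearOrder K] [TopologicalSpace K]

def iicIndicators : Set C(K, ℝ) :=
  {f | ∃ s : K, RightIsolated s ∧ ∀ x : K, f x = if x ≤ s then 1 else 0}

variable {K}

theorem mul_mem_iicIndicators {f g : C(K, ℝ)} (hf : f ∈ iicIndicators K)
    (hg : g ∈ iicIndicators K) : f * g ∈ iicIndicators K := by
  obtain ⟨s, hs, hfs⟩ := hf
  obtain ⟨t, ht, hgt⟩ := hg
  refine ⟨min s t, hs.min ht, fun x => ?_⟩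
  rw [ContinuousMap.mul_apply, hfs, hgt]
  by_cases hxs : x ≤ s <;> by_cases hxt : x ≤ t <;> simp [hxs, hxt]

theorem one_mem_iicIndicators [OrderTopology K] [CompactSpace K] [Nonempty K] :
    (1 : C(K, ℝ)) ∈ iicIndicators K := by
  obtain ⟨m, hm⟩ := isCompact_univ.exists_isGreatest (univ_nonempty (α := K))
  exact ⟨m, Or.inl fun x _ => hm.2 (mem_univ x), fun x => by simp [hm.2 (mem_univ x)]⟩

theorem RightIsolated.charFn_mem_iicIndicators [OrderTopology K] {s : K} (hs : RightIsolated s) :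
    (LocallyConstant.charFn ℝ hs.isClopen_Iic : C(K, ℝ)) ∈ iicIndicators K :=
  ⟨s, hs, fun x => by simp [LocallyConstant.coe_charFn, indicator_apply]⟩

noncomputable def iicIndicatorsSubalgebra [OrderTopology K] [CompactSpace K] [Nonempty K] :
    Subalgebra ℝ C(K, ℝ) :=
  (Submodule.span ℝ (iicIndicators K)).toSubalgebra
    (Submodule.subset_span one_mem_iicIndicators)
    fun f g hf hg => by
      have hfg := Submodule.mul_mem_mul hf hg
      rw [Submodule.span_mul_span] at hfg
      exact Submodule.span_mono (Set.mul_subset_iff.mpr fun _ h _ h' =>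
        mul_mem_iicIndicators h h') hfg

theorem iicIndicatorsSubalgebra_separatesPoints [OrderTopology K] [CompactSpace K] [Nonempty K]
    (hzd : IsTopologicalBasis {U : Set K | IsClopen U}) :
    (iicIndicatorsSubalgebra (K := K)).SeparatesPoints := by
  have key : ∀ {x y : K}, x < y → ∃ f ∈ iicIndicators K, f x ≠ f y := by
    intro x y hxy
    obtain ⟨s, hs, hxs, hsy⟩ := exists_rightIsolated_mem_Ico hzd hxy
    exact ⟨_, hs.charFn_mem_iicIndicators, by
      simp [LocallyConstant.coe_charFn, hxs, hsy.not_ge]⟩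
  intro x y hxy
  obtain ⟨f, hf, hfxy⟩ : ∃ f ∈ iicIndicators K, f x ≠ f y := by
    rcases hxy.lt_or_gt with h | h
    · exact key h
    · obtain ⟨f, hf, hfyx⟩ := key h
      exact ⟨f, hf, hfyx.symm⟩
  exact ⟨f, ⟨f, Submodule.subset_span hf, rfl⟩, hfxy⟩

end Indicators

theorem stmt8 {K : Type*} [LinearOrder K] [TopologicalSpace K] [OrderTopology K]
    [CompactSpace K] [Nonempty K]
    (hzd : IsTopologicalBasis {U : Set K | IsClopen U}) :
    closure (Submodule.span ℝ
      {f : C(K, ℝ) | ∃ s : K, RightIsolated s ∧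
        ∀ x : K, f x = if x ≤ s then 1 else 0} : Set C(K, ℝ)) = Set.univ := by
  have hdense := ContinuousMap.subalgebra_topologicalClosure_eq_top_of_separatesPoints _
    (iicIndicatorsSubalgebra_separatesPoints hzd)
  exact congrArg SetLike.coe hdense
end

section
/- In a compact line K, every clopen subset is a finite disjoint union of clopen intervals, each of the form [0,b] or ]b',b] with b, b' right-isolated points of K (0 denoting the minimum of K). -/
/-!
Every order-connected component of a clopen set `C` is clopen, hence a compact interval `[a, b]`.
Openness at `b` forces `b` to be the maximum or to have a successor; openness at `a` forces `a`
to be the minimum or to have a predecessor `a'`, and then `[a, b] = ]a', b]`. The components are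
disjoint open sets covering the compact set `C`, so there are only finitely many of them.
-/

open Set

open Topology

def IsRightIsolatedInterval {K : Type*} [LinearOrder K] (J : Set K) : Prop :=
  (∃ b : K, RightIsolated b ∧ J = Iic b) ∨
    (∃ b' b : K, RightIsolated b' ∧ RightIsolated b ∧ b' < b ∧ J = Ioc b' b)

theorem Set.Finite.exists_fin_enumeration {α : Type*} {S : Set (Set α)} (hS : S.Finite)
    (hd : S.PairwiseDisjoint id) :
    ∃ (n : ℕ) (I : Fin n → Set α), (∀ i j, i ≠ j → Disjoint (I i) (I j)) ∧
      ⋃₀ S = ⋃ i, I i ∧ ∀ i, I i ∈ S := by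
  have := hS.to_subtype
  obtain ⟨n, ⟨e⟩⟩ := Finite.exists_equiv_fin S
  refine ⟨n, fun i => e.symm i, fun i j hij => ?_, ?_, fun i => (e.symm i).2⟩
  · exact hd (e.symm i).2 (e.symm j).2 fun h => hij (e.symm.injective (Subtype.ext h))
  · rw [sUnion_eq_iUnion]
    exact (e.symm.surjective.iUnion_comp fun s : S => (s : Set α)).symm

section LinearOrder

variable {K : Type*} [LinearOrder K]

theorem Set.sUnion_image_ordConnectedComponent (s : Set K) :
    ⋃₀ (ordConnectedComponent s '' s) = s := by
  rw [sUnion_image]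
  exact Subset.antisymm (iUnion₂_subset fun _ _ => ordConnectedComponent_subset)
    fun x hx => mem_biUnion hx (self_mem_ordConnectedComponent.2 hx)

theorem Set.pairwiseDisjoint_image_ordConnectedComponent (s : Set K) :
    (ordConnectedComponent s '' s).PairwiseDisjoint id := by
  rintro _ ⟨x, -, rfl⟩ _ ⟨y, -, rfl⟩ hne
  refine disjoint_left.2 fun z hzx hzy => hne ?_
  exact (ordConnectedComponent_eq hzx).trans (ordConnectedComponent_eq hzy).symm

variable [TopologicalSpace K] [OrderTopology K]

theorem Set.OrdConnected.closure {s : Set K} (hs : s.OrdConnected) :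
    (closure s).OrdConnected := by
  refine ⟨fun y hy z hz t ⟨hyt, htz⟩ => ?_⟩
  rcases hyt.eq_or_lt with rfl | hyt
  · exact hy
  rcases htz.eq_or_lt with rfl | htz
  · exact hz
  obtain ⟨u, hut, hu⟩ := mem_closure_iff.1 hy (Iio t) isOpen_Iio hyt
  obtain ⟨v, htv, hv⟩ := mem_closure_iff.1 hz (Ioi t) isOpen_Ioi htz
  exact subset_closure (hs.out hu hv ⟨hut.le, htv.le⟩)

theorem Set.isOpen_ordConnectedComponent {s : Set K} (hs : IsOpen s) (x : K) :
    IsOpen (ordConnectedComponent s x) := by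
  refine isOpen_iff_mem_nhds.2 fun y hy => ?_
  rw [ordConnectedComponent_eq hy, ordConnectedComponent_mem_nhds]
  exact hs.mem_nhds (ordConnectedComponent_subset hy)

theorem Set.isClosed_ordConnectedComponent {s : Set K} (hs : IsClosed s) (x : K) :
    IsClosed (ordConnectedComponent s x) := by
  by_cases hx : x ∈ s
  · have := (inferInstance : (ordConnectedComponent s x).OrdConnected).closure
    exact closure_subset_iff_isClosed.1 <| subset_ordConnectedComponent
      (subset_closure (self_mem_ordConnectedComponent.2 hx))
      (closure_minimal ordConnectedComponent_subset hs)
  · rw [ordConnectedComponent_eq_empty.2 hx]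
    exact isClosed_empty

theorem IsCompact.finite_image_ordConnectedComponent {s : Set K} (hs' : IsCompact s)
    (hs : IsOpen s) : (ordConnectedComponent s '' s).Finite := by
  obtain ⟨t, hts, hcover⟩ := hs'.elim_nhds_subcover (ordConnectedComponent s)
    fun x hx => ordConnectedComponent_mem_nhds.2 (hs.mem_nhds hx)
  refine (t.finite_toSet.image (ordConnectedComponent s)).subset ?_
  rintro _ ⟨y, hy, rfl⟩
  obtain ⟨x, hx, hyx⟩ := mem_iUnion₂.1 (hcover hy)
  exact ⟨x, hx, (ordConnectedComponent_eq (mem_ordConnectedComponent_comm.1 hyx)).symm⟩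

theorem RightIsolated.of_isGreatest {s : Set K} {b : K} (hb : IsGreatest s b) (hs : s ∈ 𝓝 b) :
    RightIsolated b := by
  refine or_iff_not_imp_left.2 fun hmax => ?_
  obtain ⟨c, hbc, hsub⟩ := exists_Ico_subset_of_mem_nhds hs (not_isMax_iff.1 hmax)
  exact ⟨c, hbc, fun v hbv hvc => (hb.2 (hsub ⟨hbv.le, hvc⟩)).not_gt hbv⟩

theorem exists_covBy_of_isLeast {s : Set K} {a : K} (ha : IsLeast s a) (hs : s ∈ 𝓝 a)
    (hmin : ¬IsMin a) : ∃ a', a' ⋖ a := by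
  obtain ⟨c, hca, hsub⟩ := exists_Ioc_subset_of_mem_nhds hs (not_isMin_iff.1 hmin)
  exact ⟨c, hca, fun v hcv hva => (ha.2 (hsub ⟨hcv, hva.le⟩)).not_gt hva⟩

theorem isRightIsolatedInterval_Icc {a b : K} (hab : a ≤ b) (hopen : IsOpen (Icc a b)) :
    IsRightIsolatedInterval (Icc a b) := by
  have hb : RightIsolated b :=
    .of_isGreatest (isGreatest_Icc hab) (hopen.mem_nhds ⟨hab, le_rfl⟩)
  by_cases hmin : IsMin a
  · refine Or.inl ⟨b, hb, Subset.antisymm Icc_subset_Iic_self fun y hy => ⟨?_, hy⟩⟩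
    exact (le_total a y).elim id fun hya => hmin hya
  · obtain ⟨a', ha'⟩ :=
      exists_covBy_of_isLeast (isLeast_Icc hab) (hopen.mem_nhds ⟨le_rfl, hab⟩) hmin
    refine Or.inr ⟨a', b, Or.inr ⟨a, ha'⟩, hb, ha'.lt.trans_le hab, ?_⟩
    rw [← Ioi_inter_Iic, ha'.Ioi_eq, Ici_inter_Iic]

theorem IsClopen.isRightIsolatedInterval_ordConnectedComponent [CompactSpace K] {C : Set K}
    (hC : IsClopen C) {x : K} (hx : x ∈ C) :
    IsRightIsolatedInterval (ordConnectedComponent C x) := by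
  set J := ordConnectedComponent C x
  have hJopen : IsOpen J := isOpen_ordConnectedComponent hC.isOpen x
  have hJ : IsCompact J := (isClosed_ordConnectedComponent hC.isClosed x).isCompact
  have hne : J.Nonempty := nonempty_ordConnectedComponent.2 hx
  obtain ⟨a, ha⟩ := hJ.exists_isLeast hne
  obtain ⟨b, hb⟩ := hJ.exists_isGreatest hne
  have hJab : J = Icc a b :=
    Subset.antisymm (fun y hy => ⟨ha.2 hy, hb.2 hy⟩) (Set.Icc_subset J ha.1 hb.1)
  rw [hJab] at hJopen ⊢
  exact isRightIsolatedInterval_Icc (ha.2 hb.1) hJopen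

end LinearOrder

theorem stmt9_general {K : Type*} [LinearOrder K] [TopologicalSpace K] [OrderTopology K]
    [CompactSpace K]
    (C : Set K) (hC : IsClopen C) :
    ∃ (n : ℕ) (I : Fin n → Set K),
      (∀ i j, i ≠ j → Disjoint (I i) (I j)) ∧
      C = ⋃ i, I i ∧
      ∀ i, (∃ b : K, RightIsolated b ∧ I i = Set.Iic b) ∨
        (∃ b' b : K, RightIsolated b' ∧ RightIsolated b ∧ b' < b ∧
          I i = Set.Ioc b' b) := by
  obtain ⟨n, I, hdisj, hunion, hmem⟩ :=
    (hC.isClosed.isCompact.finite_image_ordConnectedComponent hC.isOpen).exists_fin_enumeration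
      (pairwiseDisjoint_image_ordConnectedComponent C)
  refine ⟨n, I, hdisj, by rw [← hunion, sUnion_image_ordConnectedComponent], fun i => ?_⟩
  obtain ⟨x, hx, hxI⟩ := hmem i
  exact hxI ▸ hC.isRightIsolatedInterval_ordConnectedComponent hx

theorem stmt9 {K : Type*} [LinearOrder K] [TopologicalSpace K] [OrderTopology K]
    [CompactSpace K] [Nonempty K]
    (C : Set K) (hC : IsClopen C) :
    ∃ (n : ℕ) (I : Fin n → Set K),
      (∀ i j, i ≠ j → Disjoint (I i) (I j)) ∧
      C = ⋃ i, I i ∧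
      ∀ i, (∃ b : K, RightIsolated b ∧ I i = Set.Iic b) ∨
        (∃ b' b : K, RightIsolated b' ∧ RightIsolated b ∧ b' < b ∧
          I i = Set.Ioc b' b) :=
  stmt9_general C hC
end
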